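/- arXiv:2105.05046 — 7 statements merged into one kernel-verified Lean document; each statement's English description precedes it below -/
import Mathlib

section
/- Let R be a finite commutative local ring and f ∈ R[x] a monic polynomial of degree n whose roots α_1, ..., α_n in an extension R' have pairwise distinct residues. Then for g ∈ R[x]/⟨f⟩, the multiplication matrix M(g) is diagonalized by the Vandermonde matrix V = V(α_1,...,α_n): V^{-1} M(g) V = diag(g(α_1), ..., g(α_n)) over R'. -/
open Polynomial

theorem stmt_9 (R R' : Type*) [CommRing R] [Finite R] [IsLocalRing R]
    [CommRing R'] [Algebra R R'] (n : ℕ) (f : Polynomial R) (hf : f.Monic)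
    (hdeg : f.natDegree = n) (α : Fin n → R')
    (hsplit : f.map (algebraMap R R') = ∏ i : Fin n, (X - C (α i)))
    (hunit : ∀ i j : Fin n, i ≠ j → IsUnit (α i - α j)) (g : Polynomial R) :
    (Matrix.of fun i j : Fin n => α j ^ (i : ℕ))⁻¹ *
        ((Matrix.of fun j k : Fin n =>
            ((X ^ (j : ℕ) * g) %ₘ f).coeff (k : ℕ)).map (algebraMap R R')) *
        (Matrix.of fun i j : Fin n => α j ^ (i : ℕ)) =
      Matrix.diagonal fun i : Fin n => Polynomial.aeval (α i) g := by
  set φ := algebraMap R R' with hφ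
  set V : Matrix (Fin n) (Fin n) R' := Matrix.of fun i j : Fin n => α j ^ (i : ℕ) with hVdef
  have hVdet : IsUnit V.det := by
    have hV : V = (Matrix.vandermonde α).transpose := by
      ext i j; simp [hVdef, Matrix.vandermonde]
    rw [hV, Matrix.det_transpose, Matrix.det_vandermonde]
    refine Finset.prod_induction _ IsUnit (fun a b ha hb => ha.mul hb) isUnit_one
      fun i _ => Finset.prod_induction _ IsUnit (fun a b ha hb => ha.mul hb) isUnit_one
      fun j hj => hunit j i (Finset.mem_Ioi.mp hj).ne'
  have key : (Matrix.of fun j k : Fin n =>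
        ((X ^ (j : ℕ) * g) %ₘ f).coeff (k : ℕ)).map φ * V
      = V * Matrix.diagonal (fun i => aeval (α i) g) := by
    ext j i
    rw [Matrix.mul_apply, Matrix.mul_diagonal]
    have hn : 0 < n := i.pos
    have hf1 : f ≠ 1 := by
      intro h; rw [h] at hdeg; simp at hdeg; omega
    have hroot : ((f.map φ).eval (α i)) = 0 := by
      rw [hsplit, eval_prod]
      exact Finset.prod_eq_zero (Finset.mem_univ i) (by simp)
    have hdegmod : (((X ^ (j : ℕ) * g) %ₘ f).map φ).natDegree < n := by
      calc (((X ^ (j : ℕ) * g) %ₘ f).map φ).natDegree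
          ≤ ((X ^ (j : ℕ) * g) %ₘ f).natDegree := natDegree_map_le
        _ < f.natDegree := natDegree_modByMonic_lt _ hf hf1
        _ = n := hdeg
    have heval : ∑ k : Fin n, φ (((X ^ (j : ℕ) * g) %ₘ f).coeff (k : ℕ)) * α i ^ (k : ℕ)
        = (((X ^ (j : ℕ) * g) %ₘ f).map φ).eval (α i) := by
      rw [eval_eq_sum_range' hdegmod, ← Fin.sum_univ_eq_sum_range]
      exact Finset.sum_congr rfl fun k _ => by simp [coeff_map]
    have hmd := congrArg (fun p => (p.map φ).eval (α i))
      (modByMonic_add_div (X ^ (j : ℕ) * g) f)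
    simp only [Polynomial.map_add, Polynomial.map_mul, eval_add, eval_mul, hroot,
      zero_mul, add_zero] at hmd
    have haev : ((X ^ (j : ℕ) * g).map φ).eval (α i) = α i ^ (j : ℕ) * aeval (α i) g := by
      rw [eval_map, ← aeval_def]
      simp
    simp only [Matrix.map_apply, Matrix.of_apply, hVdef]
    rw [heval, hmd]
    simp [eval_map, hφ, ← aeval_def]
  calc V⁻¹ * ((Matrix.of fun j k : Fin n =>
        ((X ^ (j : ℕ) * g) %ₘ f).coeff (k : ℕ)).map φ) * V
      = V⁻¹ * (V * Matrix.diagonal (fun i => aeval (α i) g)) := by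
        rw [Matrix.mul_assoc, key]
    _ = Matrix.diagonal (fun i => aeval (α i) g) := by
        rw [← Matrix.mul_assoc, Matrix.nonsing_inv_mul _ hVdet, Matrix.one_mul]
end

section
/- Let R be a finite commutative local ring and f ∈ R[x] monic of degree n whose roots α_1, ..., α_n in an extension R' have pairwise distinct residues. Then the Mattson-Solomon transform MS_f : R[x]/⟨f⟩ → R'[x]/⟨f⟩ sending g(x) to Σ_{i=1}^n g(α_i) x^{i-1} is an injective ring homomorphism when the codomain is equipped with coordinatewise (Schur) multiplication of coefficient vectors. -/
open Polynomial

-- Over a ring with zero divisors distinct roots are not enough; unit differences are what make the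
-- linear factors pairwise coprime.
theorem Polynomial.prod_X_sub_C_dvd_of_isRoot {S ι : Type*} [CommRing S] [Fintype ι]
    {α : ι → S} (hunit : Pairwise fun i j => IsUnit (α i - α j)) {q : S[X]}
    (hq : ∀ i, q.IsRoot (α i)) : ∏ i, (X - C (α i)) ∣ q :=
  Fintype.prod_dvd_of_coprime (fun _ _ hij => isCoprime_X_sub_C_of_isUnit_sub (hunit hij))
    fun i => dvd_iff_isRoot.mpr (hq i)

theorem Polynomial.Monic.dvd_of_aeval_eq_zero_of_map_eq_prod {R S ι : Type*} [CommRing R]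
    [CommRing S] [Algebra R S] [Fintype ι] (hinj : Function.Injective (algebraMap R S))
    {f : R[X]} (hf : f.Monic) {α : ι → S} (hsplit : f.map (algebraMap R S) = ∏ i, (X - C (α i)))
    (hunit : Pairwise fun i j => IsUnit (α i - α j)) {p : R[X]} (hp : ∀ i, aeval (α i) p = 0) :
    f ∣ p := by
  rw [← map_dvd_map (algebraMap R S) hinj hf, hsplit]
  exact prod_X_sub_C_dvd_of_isRoot hunit fun i => by
    rw [IsRoot, ← eval₂_eq_eval_map, ← aeval_def, hp i]

theorem stmt_10_general (R R' : Type*) [CommRing R]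
    [CommRing R'] [Algebra R R'] (n : ℕ) (f : Polynomial R) (hf : f.Monic)
    (α : Fin n → R')
    (hroot : ∀ i : Fin n, Polynomial.aeval (α i) f = 0)
    (hsplit : f.map (algebraMap R R') = ∏ i : Fin n, (X - C (α i)))
    (hunit : ∀ i j : Fin n, i ≠ j → IsUnit (α i - α j))
    (hinj : Function.Injective (algebraMap R R')) :
    Function.Injective
      (Pi.ringHom fun i : Fin n =>
        (AdjoinRoot.liftAlgHom f (Algebra.ofId R R') (α i) (hroot i)).toRingHom :
          AdjoinRoot f →+* (Fin n → R')) := by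
  rw [injective_iff_map_eq_zero]
  intro a ha
  obtain ⟨p, rfl⟩ := AdjoinRoot.mk_surjective a
  exact AdjoinRoot.mk_eq_zero.mpr <|
    hf.dvd_of_aeval_eq_zero_of_map_eq_prod hinj hsplit (fun i j => hunit i j)
      fun i => congrFun ha i

theorem stmt_10 (R R' : Type*) [CommRing R] [Finite R] [IsLocalRing R]
    [CommRing R'] [Algebra R R'] (n : ℕ) (f : Polynomial R) (hf : f.Monic)
    (hdeg : f.natDegree = n) (α : Fin n → R')
    (hroot : ∀ i : Fin n, Polynomial.aeval (α i) f = 0)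
    (hsplit : f.map (algebraMap R R') = ∏ i : Fin n, (X - C (α i)))
    (hunit : ∀ i j : Fin n, i ≠ j → IsUnit (α i - α j))
    (hinj : Function.Injective (algebraMap R R')) :
    Function.Injective
      (Pi.ringHom fun i : Fin n =>
        (AdjoinRoot.liftAlgHom f (Algebra.ofId R R') (α i) (hroot i)).toRingHom :
          AdjoinRoot f →+* (Fin n → R')) :=
  stmt_10_general R R' n f hf α hroot hsplit hunit hinj
end

section
/- Let R be a finite commutative local ring, f ∈ R[x] monic of degree n with simple roots α_1,...,α_n in a local extension R'. For g_1, g_2 ∈ R[x]/⟨f⟩, the trace of the multiplication matrix M(g_1 g_2) maps under γ: R → R' to Σ_{i=1}^n (g_1 g_2)(α_i), which equals the ⋆-inner product of MS_f(g_1) and MS_f(g_2). In particular ⟨g_1, g_2⟩_tr = 0 if and only if ⟨MS_f(g_1), MS_f(g_2)⟩_⋆ = 0. -/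
open Polynomial Matrix

theorem stmt_11 (R R' : Type*) [CommRing R] [Finite R] [IsLocalRing R]
    [CommRing R'] [Algebra R R'] (n : ℕ) (f : Polynomial R) (hf : f.Monic)
    (hdeg : f.natDegree = n) (α : Fin n → R')
    (hsplit : f.map (algebraMap R R') = ∏ i : Fin n, (X - C (α i)))
    (hunit : ∀ i j : Fin n, i ≠ j → IsUnit (α i - α j))
    (hinj : Function.Injective (algebraMap R R'))
    (g₁ g₂ : Polynomial R) :
    algebraMap R R'
        (Matrix.trace (Matrix.of fun j k : Fin n =>
          ((X ^ (j : ℕ) * (g₁ * g₂)) %ₘ f).coeff (k : ℕ))) =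
      ∑ i : Fin n, Polynomial.aeval (α i) g₁ * Polynomial.aeval (α i) g₂ ∧
    (Matrix.trace (Matrix.of fun j k : Fin n =>
          ((X ^ (j : ℕ) * (g₁ * g₂)) %ₘ f).coeff (k : ℕ)) = 0 ↔
      ∑ i : Fin n, Polynomial.aeval (α i) g₁ * Polynomial.aeval (α i) g₂ = 0) := by
  have γ := algebraMap R R'
  -- first, the main equality; the iff follows from injectivity
  suffices hmain : algebraMap R R'
        (Matrix.trace (Matrix.of fun j k : Fin n =>
          ((X ^ (j : ℕ) * (g₁ * g₂)) %ₘ f).coeff (k : ℕ))) =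
      ∑ i : Fin n, Polynomial.aeval (α i) g₁ * Polynomial.aeval (α i) g₂ by
    refine ⟨hmain, ?_⟩
    constructor
    · intro h0; rw [← hmain, h0, map_zero]
    · intro h0
      apply hinj
      rw [hmain, h0, map_zero]
  rcases Nat.eq_zero_or_pos n with hn | hn
  · subst hn; simp [Matrix.trace]
  -- roots are roots
  have hroot : ∀ i : Fin n, aeval (α i) f = 0 := by
    intro i
    rw [aeval_def, ← eval_map, hsplit, eval_prod]
    apply Finset.prod_eq_zero (Finset.mem_univ i)
    simp
  set h := g₁ * g₂ with hh
  set p : Fin n → Polynomial R := fun j => (X ^ (j : ℕ) * h) %ₘ f with hp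
  have hdegp : ∀ j, (p j).natDegree < n := by
    intro j
    have hd := degree_modByMonic_lt (X ^ (j : ℕ) * h) hf
    rcases eq_or_ne (p j) 0 with h0 | h0
    · rw [h0]; simpa using hn
    · have := (natDegree_lt_iff_degree_lt h0).mpr (by
        simpa [hp, hdeg, degree_eq_natDegree hf.ne_zero] using hd)
      simpa [hdeg] using this
  have heval : ∀ (i : Fin n) (j : Fin n),
      aeval (α i) (p j) = α i ^ (j : ℕ) * (aeval (α i) g₁ * aeval (α i) g₂) := by
    intro i j
    have e : aeval (α i) (p j) = aeval (α i) (X ^ (j : ℕ) * h) := by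
      conv_rhs => rw [← modByMonic_add_div (X ^ (j : ℕ) * h) f]
      simp [hp, hroot i]
    rw [e, hh]
    simp [_root_.map_mul, mul_assoc]
  -- coefficient expansion
  have hcoeff : ∀ (i : Fin n) (j : Fin n),
      aeval (α i) (p j) = ∑ k : Fin n, algebraMap R R' ((p j).coeff (k : ℕ)) * α i ^ (k : ℕ) := by
    intro i j
    rw [aeval_eq_sum_range' (hdegp j) (α i), Finset.sum_range fun k => (p j).coeff k • α i ^ k]
    simp [Algebra.smul_def]
  -- matrices
  set A : Matrix (Fin n) (Fin n) R' := Matrix.vandermonde α with hA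
  set M' : Matrix (Fin n) (Fin n) R' := Matrix.of fun j k : Fin n =>
    algebraMap R R' ((p j).coeff (k : ℕ)) with hM
  set D : Matrix (Fin n) (Fin n) R' :=
    Matrix.diagonal (fun i => aeval (α i) g₁ * aeval (α i) g₂) with hD
  have hdet : IsUnit Aᵀ.det := by
    rw [Matrix.det_transpose, Matrix.det_vandermonde]
    refine Finset.prod_induction _ IsUnit (fun a b ha hb => ha.mul hb) isUnit_one ?_
    intro i _
    refine Finset.prod_induction _ IsUnit (fun a b ha hb => ha.mul hb) isUnit_one ?_
    intro j hj
    exact hunit j i (by simp only [Finset.mem_Ioi] at hj; exact fun e => absurd e (ne_of_gt hj))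
  have hkey : M' * Aᵀ = Aᵀ * D := by
    ext j i
    rw [Matrix.mul_apply, Matrix.mul_apply]
    have : ∑ k, M' j k * Aᵀ k i = aeval (α i) (p j) := by
      rw [hcoeff i j]
      simp [hM, hA, Matrix.vandermonde]
    rw [this, heval i j]
    simp [hA, hD, Matrix.diagonal, Matrix.vandermonde]
  have hM'eq : M' = Aᵀ * D * Aᵀ⁻¹ := by
    rw [← hkey, Matrix.mul_assoc, Matrix.mul_nonsing_inv _ hdet, Matrix.mul_one]
  have htr : M'.trace = D.trace := by
    rw [hM'eq, Matrix.trace_mul_cycle,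
      Matrix.nonsing_inv_mul _ hdet, Matrix.one_mul]
  have htrM : algebraMap R R'
      (Matrix.trace (Matrix.of fun j k : Fin n =>
        ((X ^ (j : ℕ) * (g₁ * g₂)) %ₘ f).coeff (k : ℕ))) = M'.trace := by
    rw [Matrix.trace, Matrix.trace, map_sum]
    rfl
  rw [htrM, htr, Matrix.trace_diagonal]
end

section
/- Let R be a finite commutative local ring and f ∈ R[x] monic of degree n with simple roots (differences of distinct roots are units in the extension). Then the trace bilinear form ⟨g_1, g_2⟩_tr = trace(M(g_1 g_2)) on R[x]/⟨f⟩ is non-degenerate: if ⟨k, x^i⟩_tr = 0 for all 0 ≤ i ≤ n−1 then k = 0. -/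
open Polynomial Finset

private lemma isUnit_finset_prod {ι M : Type*} [CommMonoid M] (s : Finset ι) (f : ι → M)
    (h : ∀ i ∈ s, IsUnit (f i)) : IsUnit (∏ i ∈ s, f i) :=
  Finset.prod_induction f IsUnit (fun _ _ => IsUnit.mul) isUnit_one h

private lemma aux_modlin {S : Type*} [CommRing S] {n : ℕ} (fS : S[X]) (hfS : fS.Monic)
    (g p : S[X]) (hp : p.natDegree < n) (l : ℕ) :
    ∑ j : Fin n, p.coeff (j : ℕ) * ((X ^ (j : ℕ) * g) %ₘ fS).coeff l
      = ((p * g) %ₘ fS).coeff l := by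
  have hsum : ∀ (s : Finset ℕ) (h : ℕ → S[X]), (∑ i ∈ s, h i) %ₘ fS = ∑ i ∈ s, h i %ₘ fS := by
    intro s h
    induction s using Finset.induction with
    | empty => simp
    | @insert a s ha ih =>
        rw [Finset.sum_insert ha, Finset.sum_insert ha, Polynomial.add_modByMonic, ih]
  conv_rhs => rw [p.as_sum_range' n hp]
  rw [Finset.sum_mul, hsum, Polynomial.finset_sum_coeff, ← Fin.sum_univ_eq_sum_range
    (fun i => ((Polynomial.monomial i (p.coeff i) * g) %ₘ fS).coeff l)]
  refine Finset.sum_congr rfl fun j _ => ?_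
  have hmono : Polynomial.monomial (j : ℕ) (p.coeff (j : ℕ)) * g
      = p.coeff (j : ℕ) • (X ^ (j : ℕ) * g) := by
    rw [smul_eq_C_mul, ← mul_assoc, ← C_mul_X_pow_eq_monomial]
  rw [hmono, Polynomial.smul_modByMonic, Polynomial.coeff_smul, smul_eq_mul]

/-- Trace of multiplication by `g` on `S[X]/(∏ (X - α i))` equals `∑ g(α i)`,
when the differences of the roots are units. -/
private lemma trace_mul_eq_sum {S : Type*} [CommRing S] {n : ℕ} (α : Fin n → S)
    (hunit : ∀ i j : Fin n, i ≠ j → IsUnit (α i - α j)) (g : S[X]) :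
    Matrix.trace (Matrix.of fun j l : Fin n =>
      ((X ^ (j : ℕ) * g) %ₘ (∏ i : Fin n, (X - C (α i)))).coeff (l : ℕ))
      = ∑ m : Fin n, g.eval (α m) := by
  classical
  nontriviality S
  set fS : S[X] := ∏ i : Fin n, (X - C (α i)) with hfS_def
  have hfS : fS.Monic := monic_prod_of_monic _ _ fun i _ => monic_X_sub_C _
  have hdegn : fS.degree = (n : WithBot ℕ) := by
    rw [Polynomial.degree_eq_natDegree hfS.ne_zero]
    norm_cast
    rw [hfS_def, Polynomial.natDegree_prod_of_monic _ _ fun i _ => monic_X_sub_C _]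
    simp [Polynomial.natDegree_X_sub_C]
  -- the Lagrange-type polynomials
  set q : Fin n → S[X] := fun m => ∏ j ∈ Finset.univ.erase m, (X - C (α j)) with hq_def
  have hfq : ∀ m, fS = (X - C (α m)) * q m := fun m =>
    (Finset.mul_prod_erase Finset.univ _ (Finset.mem_univ m)).symm
  have hqdeg : ∀ m, (q m).natDegree < n := by
    intro m
    have h1 : (q m).natDegree ≤ ∑ j ∈ Finset.univ.erase m, (X - C (α j)).natDegree :=
      Polynomial.natDegree_prod_le _ _
    have h2 : ∑ j ∈ Finset.univ.erase m, (X - C (α j)).natDegree ≤ n - 1 := by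
      refine le_trans (Finset.sum_le_sum fun j _ => Polynomial.natDegree_X_sub_C_le (α j)) ?_
      simp [Finset.card_erase_of_mem]
    exact lt_of_le_of_lt (le_trans h1 h2) (Nat.sub_lt m.pos Nat.one_pos)
  set W : Matrix (Fin n) (Fin n) S := Matrix.of fun m l => (q m).coeff (l : ℕ) with hW_def
  set A : Matrix (Fin n) (Fin n) S := Matrix.of fun j l =>
    ((X ^ (j : ℕ) * g) %ₘ fS).coeff (l : ℕ) with hA_def
  set D : Matrix (Fin n) (Fin n) S := Matrix.diagonal fun m => g.eval (α m) with hD_def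
  -- Key identity : W * A = D * W
  have key : W * A = D * W := by
    ext m l
    rw [Matrix.mul_apply]
    have h0 : ∑ j : Fin n, W m j * A j l = ((q m * g) %ₘ fS).coeff (l : ℕ) :=
      aux_modlin fS hfS g (q m) (hqdeg m) l
    rw [h0]
    have hmod : (q m * g) %ₘ fS = C (g.eval (α m)) * q m := by
      obtain ⟨c, hc⟩ : (X - C (α m)) ∣ (g - C (g.eval (α m))) :=
        Polynomial.X_sub_C_dvd_sub_C_eval
      have hsplit2 : q m * g = fS * c + C (g.eval (α m)) * q m := by
        rw [hfq m]
        linear_combination (q m) * hc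
      have h1 : (fS * c) %ₘ fS = 0 := (Polynomial.modByMonic_eq_zero_iff_dvd hfS).2 ⟨c, rfl⟩
      have h2 : (C (g.eval (α m)) * q m) %ₘ fS = C (g.eval (α m)) * q m := by
        rw [Polynomial.modByMonic_eq_self_iff hfS]
        calc degree (C (g.eval (α m)) * q m) ≤ degree (C (g.eval (α m))) + degree (q m) :=
              Polynomial.degree_mul_le _ _
          _ ≤ 0 + degree (q m) := add_le_add_left Polynomial.degree_C_le _
          _ = degree (q m) := zero_add _
          _ ≤ ((q m).natDegree : WithBot ℕ) := Polynomial.degree_le_natDegree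
          _ < (n : WithBot ℕ) := by exact_mod_cast hqdeg m
          _ = fS.degree := hdegn.symm
      rw [hsplit2, Polynomial.add_modByMonic, h1, h2, zero_add]
    rw [hmod, Polynomial.coeff_C_mul, hD_def, Matrix.diagonal_mul, hW_def, Matrix.of_apply]
  -- W is invertible
  have hWdet : IsUnit W.det := by
    set U : Matrix (Fin n) (Fin n) S := Matrix.of fun l i => α i ^ (l : ℕ) with hU_def
    have hWU : W * U = Matrix.diagonal fun m => ∏ j ∈ Finset.univ.erase m, (α m - α j) := by
      ext m i
      rw [Matrix.mul_apply]
      have heval : ∑ j : Fin n, W m j * U j i = (q m).eval (α i) := by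
        rw [Polynomial.eval_eq_sum_range' (hqdeg m), ← Fin.sum_univ_eq_sum_range]
        exact Finset.sum_congr rfl fun j _ => rfl
      rw [heval]
      by_cases him : i = m
      · subst him
        rw [Matrix.diagonal_apply_eq, hq_def]
        simp [Polynomial.eval_prod]
      · rw [Matrix.diagonal_apply_ne _ fun hc => him hc.symm, hq_def]
        simp only [Polynomial.eval_prod, Polynomial.eval_sub, Polynomial.eval_X,
          Polynomial.eval_C]
        exact Finset.prod_eq_zero (Finset.mem_erase.2 ⟨him, Finset.mem_univ i⟩) (sub_self _)
    have hdiag : IsUnit (W * U).det := by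
      rw [hWU, Matrix.det_diagonal]
      exact isUnit_finset_prod _ _ fun m _ => isUnit_finset_prod _ _
        fun j hj => hunit m j fun hc => (Finset.mem_erase.1 hj).1 hc.symm
    rw [Matrix.det_mul] at hdiag
    exact isUnit_of_mul_isUnit_left hdiag
  -- conclude: trace A = trace D
  letI := W.invertibleOfIsUnitDet hWdet
  have hA : A = ⅟W * (D * W) := by
    rw [← key, ← Matrix.mul_assoc, invOf_mul_self, Matrix.one_mul]
  calc Matrix.trace A = Matrix.trace ((D * W) * ⅟W) := by rw [hA, Matrix.trace_mul_comm]
    _ = Matrix.trace D := by rw [Matrix.mul_assoc, mul_invOf_self, Matrix.mul_one]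
    _ = ∑ m : Fin n, g.eval (α m) := Matrix.trace_diagonal _

theorem stmt_12 (R R' : Type*) [CommRing R] [Finite R] [IsLocalRing R]
    [CommRing R'] [Algebra R R'] (n : ℕ) (f : Polynomial R) (hf : f.Monic)
    (hdeg : f.natDegree = n) (α : Fin n → R')
    (hsplit : f.map (algebraMap R R') = ∏ i : Fin n, (X - C (α i)))
    (hunit : ∀ i j : Fin n, i ≠ j → IsUnit (α i - α j))
    (hinj : Function.Injective (algebraMap R R'))
    (k : Polynomial R) (hk : k.degree < (n : ℕ))
    (h : ∀ i : Fin n,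
      Matrix.trace (Matrix.of fun j l : Fin n =>
        ((X ^ (j : ℕ) * (k * X ^ (i : ℕ))) %ₘ f).coeff (l : ℕ)) = 0) :
    k = 0 := by
  classical
  by_cases hk0 : k = 0
  · exact hk0
  have hknd : k.natDegree < n := (Polynomial.natDegree_lt_iff_degree_lt hk0).2 hk
  set φ := algebraMap R R' with hφ
  set k' : R'[X] := k.map φ with hk'_def
  have hk'nd : k'.natDegree < n := lt_of_le_of_lt Polynomial.natDegree_map_le hknd
  -- transfer the hypothesis to R'
  have h' : ∀ i : Fin n, ∑ m : Fin n, k'.eval (α m) * α m ^ (i : ℕ) = 0 := by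
    intro i
    have h1 : Matrix.trace (Matrix.of fun j l : Fin n =>
        ((X ^ (j : ℕ) * (k' * X ^ (i : ℕ))) %ₘ ∏ i : Fin n, (X - C (α i))).coeff (l : ℕ)) = 0 := by
      have h2 := congrArg φ (h i)
      rw [map_zero] at h2
      rw [← h2, Matrix.trace, Matrix.trace, map_sum]
      refine (Finset.sum_congr rfl fun j _ => ?_).symm
      simp only [Matrix.diag_apply, Matrix.of_apply]
      rw [← Polynomial.coeff_map, Polynomial.map_modByMonic _ hf, hsplit]
      congr 2
      simp [hk'_def, Polynomial.map_mul, Polynomial.map_pow]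
    rw [trace_mul_eq_sum α hunit] at h1
    rw [← h1]
    exact Finset.sum_congr rfl fun m _ => by simp
  -- Vandermonde argument, twice
  have hVdet : IsUnit (Matrix.vandermonde α).det := by
    rw [Matrix.det_vandermonde]
    exact isUnit_finset_prod _ _ fun i _ => isUnit_finset_prod _ _
      fun j hj => hunit j i (Finset.mem_Ioi.1 hj).ne'
  have zero_of_mulVec : ∀ (V : Matrix (Fin n) (Fin n) R'), IsUnit V.det →
      ∀ v : Fin n → R', V.mulVec v = 0 → v = 0 := by
    intro V hV v hv
    letI := V.invertibleOfIsUnitDet hV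
    have : (⅟V).mulVec (V.mulVec v) = v := by
      rw [Matrix.mulVec_mulVec, invOf_mul_self, Matrix.one_mulVec]
    rw [hv, Matrix.mulVec_zero] at this
    exact this.symm
  have hroots : ∀ m : Fin n, k'.eval (α m) = 0 := by
    have := zero_of_mulVec (Matrix.vandermonde α).transpose (by rwa [Matrix.det_transpose])
      (fun m => k'.eval (α m)) (funext fun i => by
        simpa [Matrix.mulVec, dotProduct, Matrix.vandermonde, mul_comm] using h' i)
    exact fun m => congrFun this m
  have hcoeff : ∀ m : Fin n, k'.coeff (m : ℕ) = 0 := by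
    have := zero_of_mulVec (Matrix.vandermonde α) hVdet (fun l => k'.coeff (l : ℕ))
      (funext fun m => by
        have := hroots m
        rw [Polynomial.eval_eq_sum_range' hk'nd, ← Fin.sum_univ_eq_sum_range] at this
        simpa [Matrix.mulVec, dotProduct, Matrix.vandermonde, mul_comm] using this)
    exact fun m => congrFun this m
  have hk' : k' = 0 := by
    ext l
    rcases lt_or_ge l n with hl | hl
    · simpa using hcoeff ⟨l, hl⟩
    · exact Polynomial.coeff_eq_zero_of_natDegree_lt (lt_of_lt_of_le hk'nd hl)
  refine Polynomial.map_injective φ hinj ?_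
  rw [Polynomial.map_zero]
  exact hk'
end

section
/- Let R be a finite commutative local ring, f ∈ R[x] monic with pairwise coprime factorization f = f_1···f_r and corresponding complete set of orthogonal idempotents e_1,...,e_r in R_f = R[x]/⟨f⟩. If an ideal (code) C of R_f is generated by the idempotent e = Σ_{j∈I} e_j, then its trace-dual C^{⊥_tr} = {g : trace(M(gc)) = 0 for all c ∈ C} equals the annihilator Ann(C) = ideal generated by Σ_{j∉I} e_j, assuming f has simple roots in a local extension (so the trace form is non-degenerate). -/
open Polynomial

namespace Stmt14Aux

variable {R : Type*} [CommRing R]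

noncomputable def trM (f p : Polynomial R) (n : ℕ) : R :=
  ∑ a : Fin n, ((X ^ (a : ℕ) * p) %ₘ f).coeff (a : ℕ)

lemma trace_eq_trM (f p : Polynomial R) (n : ℕ) :
    Matrix.trace (Matrix.of fun a b : Fin n =>
      ((X ^ (a : ℕ) * p) %ₘ f).coeff (b : ℕ)) = trM f p n := rfl

lemma modByMonic_congr {f p q : Polynomial R} (hf : f.Monic) (h : f ∣ p - q) :
    p %ₘ f = q %ₘ f := by
  obtain ⟨t, ht⟩ := h
  have hp : p = q + f * t := by linear_combination ht
  rw [hp, add_modByMonic, (modByMonic_eq_zero_iff_dvd hf).mpr ⟨t, rfl⟩, add_zero]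

lemma trM_congr {f p q : Polynomial R} (hf : f.Monic) (h : f ∣ p - q) (n : ℕ) :
    trM f p n = trM f q n := by
  unfold trM
  refine Finset.sum_congr rfl fun a _ => ?_
  rw [modByMonic_congr hf (by rw [← mul_sub]; exact h.mul_left _)]

lemma trM_zero_of_dvd {f p : Polynomial R} (hf : f.Monic) (h : f ∣ p) (n : ℕ) :
    trM f p n = 0 := by
  unfold trM
  refine Finset.sum_eq_zero fun a _ => ?_
  rw [(modByMonic_eq_zero_iff_dvd hf).mpr (h.mul_left _), coeff_zero]

lemma trM_add (f p q : Polynomial R) (n : ℕ) :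
    trM f (p + q) n = trM f p n + trM f q n := by
  unfold trM
  rw [← Finset.sum_add_distrib]
  refine Finset.sum_congr rfl fun a _ => ?_
  rw [mul_add, add_modByMonic, coeff_add]

lemma trM_zero (f : Polynomial R) (n : ℕ) : trM f 0 n = 0 := by
  unfold trM
  simp [Polynomial.zero_modByMonic]

lemma trM_C_mul (f p : Polynomial R) (r : R) (n : ℕ) :
    trM f (C r * p) n = r * trM f p n := by
  unfold trM
  rw [Finset.mul_sum]
  refine Finset.sum_congr rfl fun a _ => ?_
  have : X ^ (a : ℕ) * (C r * p) = r • (X ^ (a : ℕ) * p) := by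
    rw [Polynomial.smul_eq_C_mul]; ring
  rw [this, smul_modByMonic, Polynomial.coeff_smul, smul_eq_mul]

lemma trM_sum {ι : Type*} (f : Polynomial R) (s : Finset ι) (p : ι → Polynomial R) (n : ℕ) :
    trM f (∑ i ∈ s, p i) n = ∑ i ∈ s, trM f (p i) n := by
  classical
  induction s using Finset.induction with
  | empty => simp [trM_zero]
  | insert _ _ h ih => rw [Finset.sum_insert h, Finset.sum_insert h, trM_add, ih]

lemma trM_map {R' : Type*} [CommRing R'] (φ : R →+* R') {f : Polynomial R} (hf : f.Monic)
    (p : Polynomial R) (n : ℕ) :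
    φ (trM f p n) = trM (f.map φ) (p.map φ) n := by
  unfold trM
  rw [map_sum]
  refine Finset.sum_congr rfl fun a _ => ?_
  rw [← Polynomial.coeff_map, Polynomial.map_modByMonic φ hf, Polynomial.map_mul,
    Polynomial.map_pow, Polynomial.map_X]

lemma trM_split {R' : Type*} [CommRing R'] {n : ℕ} (α : Fin n → R')
    (hunit : ∀ i j : Fin n, i ≠ j → IsUnit (α i - α j)) (h : Polynomial R') :
    trM (∏ i : Fin n, (X - C (α i))) h n = ∑ i : Fin n, h.eval (α i) := by
  classical
  cases subsingleton_or_nontrivial R' with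
  | inl hs => exact Subsingleton.elim _ _
  | inr hn =>
  rcases Nat.eq_zero_or_pos n with h0 | hpos
  · subst h0; simp [trM]
  set f' : Polynomial R' := ∏ i : Fin n, (X - C (α i)) with hf'def
  have hf' : f'.Monic := monic_prod_of_monic _ _ fun i _ => monic_X_sub_C _
  have hdeg' : f'.natDegree = n := by
    rw [hf'def, Polynomial.natDegree_prod_of_monic _ _ (fun i _ => monic_X_sub_C _)]
    simp
  have hroot : ∀ j, f'.eval (α j) = 0 := fun j => by
    rw [hf'def, Polynomial.eval_prod]
    exact Finset.prod_eq_zero (Finset.mem_univ j) (by simp)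
  set M : Matrix (Fin n) (Fin n) R' :=
    Matrix.of fun a b : Fin n => ((X ^ (a : ℕ) * h) %ₘ f').coeff (b : ℕ) with hMdef
  set Vt : Matrix (Fin n) (Fin n) R' := (Matrix.vandermonde α).transpose with hVtdef
  have hdegmod : ∀ p : Polynomial R', (p %ₘ f').natDegree < n := by
    intro p
    by_cases hp : p %ₘ f' = 0
    · rw [hp]; simpa using hpos
    · refine (natDegree_lt_iff_degree_lt hp).mpr ?_
      have := Polynomial.degree_modByMonic_lt p hf'
      rwa [Polynomial.degree_eq_natDegree hf'.ne_zero, hdeg'] at this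
  have hMV : M * Vt = Vt * Matrix.diagonal (fun j => h.eval (α j)) := by
    ext a j
    rw [Matrix.mul_diagonal, Matrix.mul_apply]
    have hVt : ∀ c : Fin n, Vt c j = α j ^ (c : ℕ) := fun c => rfl
    simp only [hVt, hMdef, Matrix.of_apply]
    have heval : ∑ c : Fin n, ((X ^ (a : ℕ) * h) %ₘ f').coeff (c : ℕ) * α j ^ (c : ℕ)
        = ((X ^ (a : ℕ) * h) %ₘ f').eval (α j) := by
      rw [Polynomial.eval_eq_sum_range' (hdegmod _)]
      exact Fin.sum_univ_eq_sum_range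
        (fun c => ((X ^ (a : ℕ) * h) %ₘ f').coeff c * α j ^ c) n
    rw [heval, Polynomial.modByMonic_eq_sub_mul_div _ f']
    simp [Polynomial.eval_mul, Polynomial.eval_pow, hroot j]
  have hdet : IsUnit Vt.det := by
    rw [hVtdef, Matrix.det_transpose, Matrix.det_vandermonde]
    refine Finset.prod_induction _ IsUnit (fun a b => IsUnit.mul) isUnit_one fun i _ => ?_
    refine Finset.prod_induction _ IsUnit (fun a b => IsUnit.mul) isUnit_one fun j hj => ?_
    exact hunit j i (Finset.mem_Ioi.mp hj).ne'
  haveI : Invertible Vt := Matrix.invertibleOfIsUnitDet Vt hdet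
  have hM : M = Vt * Matrix.diagonal (fun j => h.eval (α j)) * ⅟Vt := by
    rw [← hMV, mul_assoc, mul_invOf_self, mul_one]
  have : Matrix.trace M = ∑ i : Fin n, h.eval (α i) := by
    rw [hM, Matrix.trace_mul_comm, ← mul_assoc, invOf_mul_self, one_mul,
      Matrix.trace_diagonal]
  rw [← this]
  rfl

lemma isUnit_of_map_isUnit {R' : Type*} [CommRing R'] [Nontrivial R'] [Finite R]
    [IsLocalRing R] (φ : R →+* R') {x : R} (h : IsUnit (φ x)) : IsUnit x := by
  by_contra hx
  -- x is nilpotent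
  have hnil : ∃ k, x ^ k = 0 := by
    obtain ⟨a, b, hab, he⟩ := Finite.exists_ne_map_eq_of_infinite (fun k : ℕ => x ^ k)
    have key : ∀ a b : ℕ, a < b → x ^ a = x ^ b → ∃ k, x ^ k = 0 := by
      intro a b hlt heq
      have hb : x ^ a * (1 - x ^ (b - a)) = 0 := by
        have : x ^ b = x ^ a * x ^ (b - a) := by
          rw [← pow_add]; congr 1; omega
        rw [mul_sub, mul_one, ← this, heq, sub_self]
      have hnu : ¬ IsUnit (x ^ (b - a)) := fun hu =>
        hx ((isUnit_pow_iff (by omega : b - a ≠ 0)).mp hu)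
      have hu1 : IsUnit (1 - x ^ (b - a)) :=
        IsLocalRing.isUnit_one_sub_self_of_mem_nonunits _ hnu
      exact ⟨a, (IsUnit.mul_left_eq_zero hu1).mp hb⟩
    rcases lt_trichotomy a b with h1 | h1 | h1
    · exact key a b h1 he
    · exact absurd h1 hab
    · exact key b a h1 he.symm
  obtain ⟨k, hk⟩ := hnil
  have : (φ x) ^ k = 0 := by rw [← map_pow, hk, map_zero]
  have : IsUnit (0 : R') := this ▸ h.pow k
  simpa using this

lemma nondeg {R' : Type*} [CommRing R'] [Finite R] [IsLocalRing R]
    (φ : R →+* R') {n : ℕ} {f : Polynomial R} (hf : f.Monic) (hdeg : f.natDegree = n)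
    (α : Fin n → R') (hsplit : f.map φ = ∏ i : Fin n, (X - C (α i)))
    (hunit : ∀ i j : Fin n, i ≠ j → IsUnit (α i - α j))
    (hinj : Function.Injective φ)
    (u : Polynomial R) (hu : ∀ v : Polynomial R, trM f (u * v) n = 0) : f ∣ u := by
  classical
  cases subsingleton_or_nontrivial R with
  | inl hs => exact ⟨0, Subsingleton.elim _ _⟩
  | inr hR =>
  haveI : Nontrivial R' := by
    obtain ⟨x, y, hxy⟩ := exists_pair_ne R
    exact ⟨⟨φ x, φ y, fun hh => hxy (hinj hh)⟩⟩
  rcases Nat.eq_zero_or_pos n with h0 | hpos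
  · have : f = 1 := (hf.natDegree_eq_zero).mp (by omega)
    rw [this]; exact one_dvd u
  set u' := u %ₘ f with hu'def
  have hdvdu : f ∣ u' - u := ⟨-(u /ₘ f), by
    rw [hu'def, Polynomial.modByMonic_eq_sub_mul_div u f]; ring⟩
  have hu' : ∀ v : Polynomial R, trM f (u' * v) n = 0 := fun v => by
    rw [trM_congr hf (by rw [← sub_mul]; exact hdvdu.mul_right v) n]
    exact hu v
  have hdeg_u' : u'.natDegree < n := by
    by_cases hz : u' = 0
    · rw [hz]; simpa using hpos
    · refine (natDegree_lt_iff_degree_lt hz).mpr ?_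
      have := Polynomial.degree_modByMonic_lt u hf
      rwa [Polynomial.degree_eq_natDegree hf.ne_zero, hdeg] at this
  set G : Matrix (Fin n) (Fin n) R :=
    Matrix.of fun a b : Fin n => trM f (X ^ ((a : ℕ) + (b : ℕ))) n with hGdef
  have hGmap : ∀ a b : Fin n, φ (G a b) = ∑ i : Fin n, α i ^ ((a : ℕ) + (b : ℕ)) := by
    intro a b
    rw [hGdef, Matrix.of_apply, trM_map φ hf, Polynomial.map_pow, Polynomial.map_X, hsplit,
      trM_split α hunit]
    exact Finset.sum_congr rfl fun i _ => by rw [Polynomial.eval_pow, Polynomial.eval_X]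
  have hdetG : IsUnit G.det := by
    have hvdet : IsUnit (Matrix.vandermonde α).det := by
      rw [Matrix.det_vandermonde]
      refine Finset.prod_induction _ IsUnit (fun a b => IsUnit.mul) isUnit_one fun i _ => ?_
      refine Finset.prod_induction _ IsUnit (fun a b => IsUnit.mul) isUnit_one fun j hj => ?_
      exact hunit j i (Finset.mem_Ioi.mp hj).ne'
    refine isUnit_of_map_isUnit φ ?_
    have : φ G.det = ((Matrix.vandermonde α).transpose * Matrix.vandermonde α).det := by
      rw [RingHom.map_det]
      congr 1
      ext a b
      rw [Matrix.mul_apply, RingHom.mapMatrix_apply, Matrix.map_apply, hGmap a b]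
      exact Finset.sum_congr rfl fun i _ => by
        rw [Matrix.transpose_apply, Matrix.vandermonde, Matrix.of_apply, Matrix.of_apply,
          pow_add]
    rw [this, Matrix.det_mul, Matrix.det_transpose]
    exact hvdet.mul hvdet
  haveI : Invertible G := Matrix.invertibleOfIsUnitDet G hdetG
  set v : Fin n → R := fun a => u'.coeff (a : ℕ) with hvdef
  have hvG : Matrix.vecMul v G = 0 := by
    funext b
    have hexp : u' * X ^ (b : ℕ) =
        ∑ i ∈ Finset.range n, C (u'.coeff i) * (X ^ (i + (b : ℕ))) := by
      conv_lhs => rw [Polynomial.as_sum_range' u' n hdeg_u']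
      rw [Finset.sum_mul]
      exact Finset.sum_congr rfl fun i _ => by
        rw [← Polynomial.C_mul_X_pow_eq_monomial, pow_add]; ring
    have h1 : trM f (u' * X ^ (b : ℕ)) n
        = ∑ i ∈ Finset.range n, u'.coeff i * trM f (X ^ (i + (b : ℕ))) n := by
      rw [hexp, trM_sum]
      exact Finset.sum_congr rfl fun i _ => trM_C_mul _ _ _ _
    have h2 : Matrix.vecMul v G b = trM f (u' * X ^ (b : ℕ)) n := by
      rw [h1, Matrix.vecMul, dotProduct]
      rw [← Fin.sum_univ_eq_sum_range (fun i => u'.coeff i * trM f (X ^ (i + (b : ℕ))) n) n]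
      rfl
    rw [Pi.zero_apply, h2]
    exact hu' _
  have hv0 : v = 0 := by
    have := congrArg (fun w => Matrix.vecMul w (⅟G)) hvG
    simpa [Matrix.vecMul_vecMul, mul_invOf_self, Matrix.vecMul_one, Matrix.zero_vecMul]
      using this
  have hu'0 : u' = 0 := by
    ext k
    rcases lt_or_ge k n with hk | hk
    · have := congrFun hv0 ⟨k, hk⟩
      simpa [hvdef] using this
    · simp [Polynomial.coeff_eq_zero_of_natDegree_lt (lt_of_lt_of_le hdeg_u' hk)]
  exact (Polynomial.modByMonic_eq_zero_iff_dvd hf).mp hu'0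

end Stmt14Aux


theorem stmt_14 (R R' : Type*) [CommRing R] [Finite R] [IsLocalRing R]
    [CommRing R'] [Algebra R R'] (n r : ℕ) (f : Polynomial R) (hf : f.Monic)
    (hdeg : f.natDegree = n) (α : Fin n → R')
    (hsplit : f.map (algebraMap R R') = ∏ i : Fin n, (X - C (α i)))
    (hunit : ∀ i j : Fin n, i ≠ j → IsUnit (α i - α j))
    (hinj : Function.Injective (algebraMap R R'))
    (fi : Fin r → Polynomial R) (hmon : ∀ i, (fi i).Monic)
    (hcop : ∀ i j : Fin r, i ≠ j → IsCoprime (fi i) (fi j))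
    (hprod : f = ∏ i : Fin r, fi i)
    (e : Fin r → Polynomial R)
    (he1 : ∀ i, fi i ∣ (e i - 1))
    (he0 : ∀ i j : Fin r, i ≠ j → fi j ∣ e i)
    (I : Finset (Fin r)) :
    ∀ g : Polynomial R,
      (∀ c : Polynomial R,
          Ideal.Quotient.mk (Ideal.span {f}) c ∈
            Ideal.span {Ideal.Quotient.mk (Ideal.span {f}) (∑ j ∈ I, e j)} →
          Matrix.trace (Matrix.of fun a b : Fin n =>
            ((X ^ (a : ℕ) * (g * c)) %ₘ f).coeff (b : ℕ)) = 0) ↔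
        Ideal.Quotient.mk (Ideal.span {f}) g ∈
          Ideal.span {Ideal.Quotient.mk (Ideal.span {f}) (∑ j ∈ Iᶜ, e j)} := by
  classical
  intro g
  set Q := Ideal.Quotient.mk (Ideal.span {f}) with hQdef
  set eI : Polynomial R := ∑ j ∈ I, e j with heIdef
  set eC : Polynomial R := ∑ j ∈ Iᶜ, e j with heCdef
  have hpw : (↑(Finset.univ : Finset (Fin r)) : Set (Fin r)).Pairwise (Function.onFun IsCoprime fi) :=
    fun i _ j _ hij => hcop i j hij
  -- f divides sum of all idempotents minus 1
  have hsum1 : f ∣ (∑ j : Fin r, e j) - 1 := by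
    rw [hprod]
    refine Finset.prod_dvd_of_coprime hpw fun l _ => ?_
    have hrw : (∑ j : Fin r, e j) - 1 = (e l - 1) + ∑ j ∈ Finset.univ.erase l, e j := by
      rw [← Finset.add_sum_erase _ e (Finset.mem_univ l)]; ring
    rw [hrw]
    exact dvd_add (he1 l) (Finset.dvd_sum fun j hj => he0 j l (Finset.mem_erase.mp hj).1)
  -- f divides products of distinct idempotents
  have hee : ∀ i j : Fin r, i ≠ j → f ∣ e i * e j := by
    intro i j hij
    rw [hprod]
    refine Finset.prod_dvd_of_coprime hpw fun l _ => ?_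
    by_cases hl : l = i
    · subst hl
      exact (he0 j l (Ne.symm hij)).mul_left (e l)
    · exact (he0 i l (fun h => hl h.symm)).mul_right (e j)
  have heCI : f ∣ eI * eC := by
    rw [heIdef, heCdef, Finset.sum_mul_sum]
    refine Finset.dvd_sum fun i hi => Finset.dvd_sum fun j hj => ?_
    exact hee i j (fun h => (Finset.mem_compl.mp hj) (h ▸ hi))
  have hsumIC : f ∣ (eI + eC) - 1 := by
    rw [heIdef, heCdef, Finset.sum_add_sum_compl]
    exact hsum1
  have hchar : ∀ p s : Polynomial R,
      Q p ∈ Ideal.span {Q s} ↔ ∃ k : Polynomial R, f ∣ p - s * k := by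
    intro p s
    rw [Ideal.mem_span_singleton']
    constructor
    · rintro ⟨a, ha⟩
      obtain ⟨k, rfl⟩ := Ideal.Quotient.mk_surjective a
      refine ⟨k, ?_⟩
      have h1 : Q (s * k) = Q p := by
        rw [hQdef, map_mul, mul_comm]; exact ha
      have h2 := (Ideal.Quotient.mk_eq_mk_iff_sub_mem _ _).mp h1
      rw [Ideal.mem_span_singleton] at h2
      exact (dvd_sub_comm).mp h2
    · rintro ⟨k, hk⟩
      refine ⟨Q k, ?_⟩
      rw [hQdef, ← map_mul]
      exact ((Ideal.Quotient.mk_eq_mk_iff_sub_mem _ _).mpr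
        (Ideal.mem_span_singleton.mpr (by
          have := (dvd_sub_comm).mp hk
          rwa [mul_comm] at this)))
  constructor
  · intro h
    have h1 : ∀ v : Polynomial R, Stmt14Aux.trM f ((g * eI) * v) n = 0 := by
      intro v
      have hc : Q (eI * v) ∈ Ideal.span {Q eI} :=
        Ideal.mem_span_singleton'.mpr ⟨Q v, by rw [hQdef, ← map_mul, mul_comm]⟩
      have h2 := h (eI * v) hc
      rw [Stmt14Aux.trace_eq_trM] at h2
      rw [mul_assoc]
      exact h2
    have hdvd : f ∣ g * eI :=
      Stmt14Aux.nondeg (algebraMap R R') hf hdeg α hsplit hunit hinj _ h1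
    refine (hchar g eC).mpr ⟨g, ?_⟩
    have hrw : g - eC * g = g * eI - ((eI + eC) - 1) * g := by ring
    rw [hrw]
    exact dvd_sub hdvd (hsumIC.mul_right g)
  · intro hg c hc
    obtain ⟨k, hk⟩ := (hchar g eC).mp hg
    obtain ⟨m, hm⟩ := (hchar c eI).mp hc
    have hgc : f ∣ g * c := by
      have h1 : f ∣ (g - eC * k) * c := hk.mul_right c
      have h2 : f ∣ (eC * k) * (c - eI * m) := hm.mul_left (eC * k)
      have h3 : f ∣ (eC * k) * (eI * m) := by
        have : (eC * k) * (eI * m) = (eI * eC) * (k * m) := by ring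
        rw [this]
        exact heCI.mul_right _
      have hrw : g * c = (g - eC * k) * c + (eC * k) * (c - eI * m) + (eC * k) * (eI * m) := by
        ring
      rw [hrw]
      exact dvd_add (dvd_add h1 h2) h3
    rw [Stmt14Aux.trace_eq_trM]
    exact Stmt14Aux.trM_zero_of_dvd hf hgc n
end

section
/- Let R be a finite commutative local ring, f ∈ R[x] monic with f = f_1···f_r pairwise coprime, idempotents e_1,...,e_r as in CRT, and E_f the companion matrix of f. Then under the coefficient map ρ_f : R[x]/⟨f⟩ → R^n, the ideal R_f·e_i maps onto U_i = {a ∈ R^{1×n} : a · f_i(E_f) = 0}, the left kernel of f_i(E_f). -/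
open Polynomial

/-- The companion matrix of a monic polynomial `f` of degree `n`:
row `i` (for `i < n-1`) is the standard basis vector `e_{i+1}`, and the last
row consists of the negatives of the low-order coefficients of `f`. -/
def companionMatrix {R : Type*} [CommRing R] (n : ℕ) (f : Polynomial R) :
    Matrix (Fin n) (Fin n) R :=
  Matrix.of fun i j : Fin n =>
    if (i : ℕ) + 1 = (j : ℕ) then 1
    else if (i : ℕ) = n - 1 ∧ (i : ℕ) + 1 ≠ (j : ℕ) then -f.coeff (j : ℕ) else 0

section Aux
variable {R : Type*} [CommRing R]

lemma vecMul_companion_step (n : ℕ) (hn : 0 < n) (f : Polynomial R) (hf : f.Monic)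
    (hdeg : f.natDegree = n) (g : Polynomial R) :
    Matrix.vecMul (fun k : Fin n => (g %ₘ f).coeff (k : ℕ)) (companionMatrix n f)
      = fun k : Fin n => ((X * g) %ₘ f).coeff (k : ℕ) := by
  rcases subsingleton_or_nontrivial R with hS | hS
  · exact Subsingleton.elim _ _
  set h := g %ₘ f with hh
  have hdegf : f.degree = (n : ℕ) := by
    rw [degree_eq_natDegree hf.ne_zero, hdeg]
  have hdegh : h.degree < (n : ℕ) := by
    rw [← hdegf]; exact degree_modByMonic_lt g hf
  have hcoeffh : ∀ m, n ≤ m → h.coeff m = 0 := by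
    intro m hm
    exact coeff_eq_zero_of_degree_lt (hdegh.trans_le (by exact_mod_cast hm))
  set c := h.coeff (n - 1) with hc
  have hfn : f.coeff n = 1 := by rw [← hdeg]; exact hf.coeff_natDegree
  have hcoefff : ∀ m, n < m → f.coeff m = 0 := fun m hm =>
    coeff_eq_zero_of_natDegree_lt (hdeg ▸ hm)
  have key : (X * g) %ₘ f = X * h - C c * f := by
    have h1 : (X * g) %ₘ f = (X * h) %ₘ f := by
      conv_lhs => rw [← modByMonic_add_div g f]
      rw [mul_add, add_modByMonic, mul_left_comm, self_mul_modByMonic hf, add_zero]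
    rw [h1]
    refine (div_modByMonic_unique (C c) (X * h - C c * f) hf ⟨by ring, ?_⟩).2
    rw [hdegf, degree_lt_iff_coeff_zero]
    intro m hm
    obtain ⟨m, rfl⟩ : ∃ m', m = m' + 1 := ⟨m - 1, by omega⟩
    rw [coeff_sub, coeff_X_mul, coeff_C_mul]
    rcases eq_or_lt_of_le hm with hm' | hm'
    · have : m = n - 1 := by omega
      have : n = m + 1 := by omega
      rw [← this] at *
      simp [hfn, ← hc, show m = n -1 by omega]
    · rw [hcoeffh m (by omega), hcoefff (m+1) (by omega), mul_zero, sub_zero]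
  rw [key]
  funext j
  have hj : (j : ℕ) < n := j.isLt
  have hsplit : ∀ i : Fin n,
      h.coeff (i : ℕ) * (companionMatrix n f) i j =
        (if (i : ℕ) + 1 = (j : ℕ) then h.coeff (i : ℕ) else 0) +
        (if (i : ℕ) = n - 1 then -(c * f.coeff (j : ℕ)) else 0) := by
    intro i
    simp only [companionMatrix, Matrix.of_apply]
    by_cases h1 : (i : ℕ) + 1 = (j : ℕ)
    · have h2 : (i : ℕ) ≠ n - 1 := by omega
      simp [h1, h2]
    · rcases eq_or_ne ((i : ℕ)) (n - 1) with hi | hi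
      · simp [hi, h1, ← hc, show n - 1 + 1 ≠ (j : ℕ) by omega,
          show (1 : ℕ) + (n - 1) ≠ (j : ℕ) by omega]
      · simp [h1, hi]
  rw [Matrix.vecMul, dotProduct]
  simp only [hsplit, Finset.sum_add_distrib]
  have hsum2 : (∑ i : Fin n, if (i : ℕ) = n - 1 then -(c * f.coeff (j : ℕ)) else 0)
      = -(c * f.coeff (j : ℕ)) := by
    have he : ∀ i : Fin n, ((i : ℕ) = n - 1) = (i = ⟨n - 1, by omega⟩) := fun i => by
      simp [Fin.ext_iff]
    simp_rw [he]
    simp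
  have hsum1 : (∑ i : Fin n, if (i : ℕ) + 1 = (j : ℕ) then h.coeff (i : ℕ) else 0)
      = (X * h).coeff (j : ℕ) := by
    obtain ⟨jv, hjv⟩ := j
    match jv with
    | 0 => simp
    | Nat.succ m =>
      have he : ∀ i : Fin n, ((i : ℕ) + 1 = m + 1) = (i = ⟨m, by omega⟩) := fun i => by
        simp [Fin.ext_iff]
      simp_rw [he]
      simp [coeff_X_mul]
  rw [hsum1, hsum2, coeff_sub, coeff_C_mul]
  ring

lemma vecMul_companion_pow (n : ℕ) (hn : 0 < n) (f : Polynomial R) (hf : f.Monic)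
    (hdeg : f.natDegree = n) (g : Polynomial R) (m : ℕ) :
    Matrix.vecMul (fun k : Fin n => (g %ₘ f).coeff (k : ℕ)) ((companionMatrix n f) ^ m)
      = fun k : Fin n => ((X ^ m * g) %ₘ f).coeff (k : ℕ) := by
  induction m with
  | zero => simp [Matrix.vecMul_one]
  | succ m ih =>
    rw [pow_succ, ← Matrix.vecMul_vecMul, ih, vecMul_companion_step n hn f hf hdeg (X ^ m * g),
      show X * (X ^ m * g) = X ^ (m + 1) * g by ring]

lemma vecMul_companion_aeval (n : ℕ) (hn : 0 < n) (f : Polynomial R) (hf : f.Monic)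
    (hdeg : f.natDegree = n) (p g : Polynomial R) :
    Matrix.vecMul (fun k : Fin n => (g %ₘ f).coeff (k : ℕ))
        (Polynomial.aeval (companionMatrix n f) p)
      = fun k : Fin n => ((p * g) %ₘ f).coeff (k : ℕ) := by
  induction p using Polynomial.induction_on' with
  | add p q hp hq =>
    rw [map_add, Matrix.vecMul_add, hp, hq]
    funext k
    simp [add_mul, add_modByMonic]
  | monomial m b =>
    have h1 : (Polynomial.aeval (companionMatrix n f)) (monomial m b)
        = b • (companionMatrix n f) ^ m := by
      rw [← C_mul_X_pow_eq_monomial, map_mul, map_pow, aeval_X, aeval_C, Algebra.smul_def]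
    have hv : ∀ (v : Fin n → R) (M : Matrix (Fin n) (Fin n) R),
        Matrix.vecMul v (b • M) = b • Matrix.vecMul v M := by
      intro v M
      funext k
      simp [Matrix.vecMul, dotProduct, Finset.mul_sum, mul_left_comm]
    rw [h1, hv, vecMul_companion_pow n hn f hf hdeg g m]
    funext k
    have h2 : monomial m b * g = b • (X ^ m * g) := by
      rw [← C_mul_X_pow_eq_monomial, smul_eq_C_mul]; ring
    rw [h2, smul_modByMonic, coeff_smul]
    simp

end Aux

theorem stmt_15 (R : Type*) [CommRing R] [Finite R] [IsLocalRing R] (n r : ℕ)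
    (f : Polynomial R) (hf : f.Monic) (hdeg : f.natDegree = n)
    (fi : Fin r → Polynomial R) (hmon : ∀ i, (fi i).Monic)
    (hcop : ∀ i j : Fin r, i ≠ j → IsCoprime (fi i) (fi j))
    (hprod : f = ∏ i : Fin r, fi i)
    (e : Fin r → Polynomial R)
    (he1 : ∀ i, fi i ∣ (e i - 1))
    (he0 : ∀ i j : Fin r, i ≠ j → fi j ∣ e i) (i : Fin r) :
    ∀ a : Fin n → R,
      (∃ g : Polynomial R,
          Ideal.Quotient.mk (Ideal.span {f}) g ∈
            Ideal.span {Ideal.Quotient.mk (Ideal.span {f}) (e i)} ∧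
          a = fun k : Fin n => (g %ₘ f).coeff (k : ℕ)) ↔
        Matrix.vecMul a (Polynomial.aeval (companionMatrix n f) (fi i)) = 0 := by
  intro a
  rcases Nat.eq_zero_or_pos n with hn | hn
  · subst hn
    refine iff_of_true ⟨0, by simp, funext fun k => k.elim0⟩ (funext fun k => k.elim0)
  rcases subsingleton_or_nontrivial R with hS | hS
  · exact iff_of_true ⟨0, by simp, Subsingleton.elim _ _⟩ (Subsingleton.elim _ _)
  classical
  set P := ∏ j ∈ Finset.univ.erase i, fi j with hP
  have hfP : f = fi i * P := by
    rw [hprod, ← Finset.mul_prod_erase Finset.univ fi (Finset.mem_univ i)]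
  have hPe : P ∣ e i := by
    refine Finset.prod_dvd_of_coprime (fun x hx y hy hxy => hcop x y hxy) ?_
    intro j hj
    have hj' : j ≠ i := by simpa using hj
    exact he0 i j (Ne.symm hj')
  have hcopP : IsCoprime (fi i) P :=
    IsCoprime.prod_right fun j hj => hcop i j (Ne.symm (Finset.mem_erase.mp hj).1)
  constructor
  · rintro ⟨g, hg, rfl⟩
    rw [Ideal.mem_span_singleton] at hg
    obtain ⟨c, hc⟩ := hg
    obtain ⟨h, rfl⟩ := Ideal.Quotient.mk_surjective c
    have hdvd : f ∣ g - e i * h := by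
      rw [← Ideal.mem_span_singleton]
      exact Ideal.Quotient.eq.mp (by rw [hc, ← map_mul])
    have hg' : g %ₘ f = (e i * h) %ₘ f := by
      have h0 : (g - e i * h) %ₘ f = 0 := (modByMonic_eq_zero_iff_dvd hf).2 hdvd
      rw [sub_modByMonic, sub_eq_zero] at h0
      exact h0
    have heq : (fun k : Fin n => (g %ₘ f).coeff (k : ℕ))
        = fun k : Fin n => ((e i * h) %ₘ f).coeff (k : ℕ) := by
      funext k; rw [hg']
    rw [heq, vecMul_companion_aeval n hn f hf hdeg (fi i) (e i * h)]
    funext k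
    have hdvd2 : f ∣ fi i * (e i * h) := by
      rw [hfP]
      exact mul_dvd_mul_left _ (Dvd.dvd.mul_right hPe h)
    rw [(modByMonic_eq_zero_iff_dvd hf).2 hdvd2]
    simp
  · intro hvec
    set g : Polynomial R := ∑ k : Fin n, C (a k) * X ^ (k : ℕ) with hgdef
    have hdg : g.degree < f.degree := by
      rw [degree_eq_natDegree hf.ne_zero, hdeg]
      refine (degree_sum_le _ _).trans_lt ?_
      rw [Finset.sup_lt_iff (by exact_mod_cast WithBot.bot_lt_coe n)]
      intro k _
      exact (degree_C_mul_X_pow_le _ _).trans_lt (by exact_mod_cast k.isLt)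
    have hgmod : g %ₘ f = g := (modByMonic_eq_self_iff hf).2 hdg
    have hacoeff : ∀ k : Fin n, g.coeff (k : ℕ) = a k := by
      intro k
      rw [hgdef, finset_sum_coeff]
      have he : ∀ j : Fin n, (((k : ℕ)) = ((j : ℕ))) = (k = j) := fun j => by
        simp [Fin.ext_iff, eq_comm]
      simp only [coeff_C_mul, coeff_X_pow, mul_ite, mul_one, mul_zero, he]
      rw [Finset.sum_ite_eq Finset.univ k fun j => a j]
      simp
    have haeq : a = fun k : Fin n => (g %ₘ f).coeff (k : ℕ) := by
      funext k; rw [hgmod, hacoeff]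
    rw [haeq, vecMul_companion_aeval n hn f hf hdeg (fi i) g] at hvec
    have hdvd : f ∣ fi i * g := by
      rw [← modByMonic_eq_zero_iff_dvd hf]
      ext m
      rcases Nat.lt_or_ge m n with hm | hm
      · simpa using congrFun hvec ⟨m, hm⟩
      · rw [coeff_zero]
        refine coeff_eq_zero_of_degree_lt ((degree_modByMonic_lt _ hf).trans_le ?_)
        rw [degree_eq_natDegree hf.ne_zero, hdeg]
        exact_mod_cast hm
    obtain ⟨cq, hcq⟩ := hdvd
    have hPg : P ∣ g := ⟨cq, (hmon i).isRegular.left (show fi i * g = fi i * (P * cq) by rw [hcq, hfP]; ring)⟩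
    have hf1 : f ∣ g - e i * g := by
      rw [show g - e i * g = (1 - e i) * g by ring, hfP]
      refine hcopP.mul_dvd ?_ ?_
      · exact dvd_mul_of_dvd_left (by simpa [neg_sub] using dvd_neg.mpr (he1 i)) g
      · exact Dvd.dvd.mul_left hPg (1 - e i)
    refine ⟨g, ?_, haeq⟩
    rw [Ideal.mem_span_singleton]
    exact ⟨Ideal.Quotient.mk _ g, by
      rw [← map_mul]
      exact Ideal.Quotient.eq.mpr (Ideal.mem_span_singleton.mpr hf1)⟩
end

section
/- Let R be a commutative ring, f(x) = x^n − f_1 x with f_1 a unit, and ω = ω_j x^j with ω_j a unit and gcd(n−1, j) = 1, 1 ≤ j ≤ n−1. Then in R[x]/⟨f⟩ the powers ω^0, ω^1, ..., ω^{n-1} are pairwise distinct unit multiples of distinct monomials x^m, so the matrix W of their coefficient vectors is monomial; moreover ω satisfies h(ω) = 0 in R[x]/⟨f⟩ where h(x) = x^n − ω_j^{n-1} f_1^j x. -/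
open Polynomial

private lemma key_dvd {R : Type*} [CommRing R] (n : ℕ) (hn : 2 ≤ n) (f₁ : R) (a b : ℕ)
    (hb : 1 ≤ b) :
    (X ^ n - C f₁ * X : R[X]) ∣ (X ^ (a * (n - 1) + b) - (C f₁) ^ a * X ^ b) := by
  obtain ⟨n', rfl⟩ : ∃ n', n = n' + 2 := ⟨n - 2, by omega⟩
  obtain ⟨b', rfl⟩ : ∃ b', b = b' + 1 := ⟨b - 1, by omega⟩
  have hD : n' + 2 - 1 = n' + 1 := by omega
  rw [hD]
  induction a with
  | zero => simp
  | succ a ih =>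
    have h : (X : R[X]) ^ ((a + 1) * (n' + 1) + (b' + 1)) - (C f₁) ^ (a + 1) * X ^ (b' + 1)
        = X ^ (n' + 1) * (X ^ (a * (n' + 1) + (b' + 1)) - (C f₁) ^ a * X ^ (b' + 1))
          + (C f₁) ^ a * X ^ b' * (X ^ (n' + 2) - C f₁ * X) := by
      ring
    rw [h]
    exact dvd_add (ih.mul_left _) (dvd_mul_left _ _)

private lemma mod_eq_of {R : Type*} [CommRing R] {f p r : R[X]} (hf : f.Monic)
    (h : f ∣ p - r) (hr : r.degree < f.degree) : p %ₘ f = r := by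
  nontriviality R
  have h0 : (p - r) %ₘ f = 0 := (modByMonic_eq_zero_iff_dvd hf).mpr h
  have h1 : p %ₘ f = (p - r) %ₘ f + r %ₘ f := by
    rw [← add_modByMonic, sub_add_cancel]
  rw [h1, h0, (modByMonic_eq_self_iff hf).mpr hr, zero_add]

theorem stmt_17 (R : Type*) [CommRing R] (n j : ℕ) (hn : 2 ≤ n) (hj1 : 1 ≤ j)
    (hj2 : j ≤ n - 1) (f₁ ωj : R) (hf₁ : IsUnit f₁) (hωj : IsUnit ωj)
    (hcop : Nat.Coprime (n - 1) j) :
    (∃ (σ : Equiv.Perm (Fin n)) (d : Fin n → R),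
        (∀ k, IsUnit (d k)) ∧
        ∀ k m : Fin n,
          (((C ωj * X ^ j) ^ (k : ℕ) %ₘ (X ^ n - C f₁ * X)).coeff (m : ℕ)) =
            if m = σ k then d k else 0) ∧
      (X ^ n - C f₁ * X : Polynomial R) ∣
        ((C ωj * X ^ j) ^ n - C (ωj ^ (n - 1) * f₁ ^ j) * (C ωj * X ^ j)) := by
  rcases subsingleton_or_nontrivial R with hR | hR
  · exact ⟨⟨1, fun _ => 1, fun _ => isUnit_one, fun k m => Subsingleton.elim _ _⟩,
      Dvd.intro 0 (Subsingleton.elim _ _)⟩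
  haveI : NeZero n := ⟨by omega⟩
  have hD : 0 < n - 1 := by omega
  -- the monic modulus
  have hdegC : (C f₁ * X : R[X]).degree < (n : ℕ) := by
    refine lt_of_le_of_lt (by simpa [pow_one] using degree_C_mul_X_pow_le 1 f₁) ?_
    exact_mod_cast hn.trans_lt' (by norm_num)
  have hf : (X ^ n - C f₁ * X : R[X]).Monic := monic_X_pow_sub hdegC
  constructor
  · -- the monomial-matrix part
    have hdegf : ((n : ℕ) : WithBot ℕ) ≤ (X ^ n - C f₁ * X : R[X]).degree := by
      rw [degree_sub_eq_left_of_degree_lt (by rwa [degree_X_pow])]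
      simp
    -- the permutation underlying function
    have hbnd : ∀ k : Fin n, k ≠ 0 → (j * k - 1) % (n - 1) + 1 < n := fun k hk => by
      have := Nat.mod_lt (j * (k : ℕ) - 1) hD; omega
    set g : Fin n → Fin n := fun k =>
      if hk : k = 0 then 0 else ⟨(j * k - 1) % (n - 1) + 1, hbnd k hk⟩ with hg
    -- key decomposition: for k ≠ 0
    have hdec : ∀ k : Fin n, k ≠ 0 →
        ((j * k - 1) / (n - 1)) * (n - 1) + ((j * k - 1) % (n - 1) + 1) = j * k := by
      intro k hk
      have hk1 : 1 ≤ (k : ℕ) := by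
        rcases Nat.eq_zero_or_pos (k : ℕ) with h | h
        · exact absurd (Fin.ext h) hk
        · exact h
      have h1 : 1 ≤ j * (k : ℕ) := Nat.one_le_iff_ne_zero.mpr (by positivity)
      have := Nat.div_add_mod (j * (k : ℕ) - 1) (n - 1)
      rw [Nat.mul_comm]
      omega
    have hginj : Function.Injective g := by
      intro k k' hkk
      by_cases hk : k = 0 <;> by_cases hk' : k' = 0
      · rw [hk, hk']
      · exfalso; rw [hg] at hkk; simp only [hk, dif_pos, dif_neg hk'] at hkk
        have := congrArg Fin.val hkk
        simp only [Fin.val_zero] at this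
        omega
      · exfalso; rw [hg] at hkk; simp only [hk', dif_pos, dif_neg hk] at hkk
        have := congrArg Fin.val hkk
        simp only [Fin.val_zero] at this
        omega
      · rw [hg] at hkk; simp only [dif_neg hk, dif_neg hk'] at hkk
        have hv := congrArg Fin.val hkk
        simp only at hv
        have main : ∀ k k' : Fin n, k ≠ 0 → k' ≠ 0 → (k : ℕ) ≤ (k' : ℕ) →
            (j * k - 1) % (n - 1) = (j * k' - 1) % (n - 1) → (k : ℕ) = (k' : ℕ) := by
          intro k k' hk hk' hle hmod
          obtain ⟨a, ha_def⟩ : ∃ a, (j * (k : ℕ) - 1) / (n - 1) = a := ⟨_, rfl⟩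
          obtain ⟨a', ha'_def⟩ : ∃ a', (j * (k' : ℕ) - 1) / (n - 1) = a' := ⟨_, rfl⟩
          have e := hdec k hk
          have e' := hdec k' hk'
          rw [ha_def] at e
          rw [ha'_def] at e'
          have hkk2 : j * (k : ℕ) ≤ j * (k' : ℕ) := Nat.mul_le_mul_left _ hle
          have ha : a ≤ a' := by
            by_contra hcon
            push_neg at hcon
            have hstep : a' * (n - 1) + (n - 1) ≤ a * (n - 1) := by
              calc a' * (n - 1) + (n - 1) = (a' + 1) * (n - 1) := by ring
                _ ≤ a * (n - 1) := Nat.mul_le_mul_right _ hcon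
            omega
          obtain ⟨c, hc⟩ := Nat.exists_eq_add_of_le ha
          have hjd : j * (k' : ℕ) - j * (k : ℕ) = c * (n - 1) := by
            have : a' * (n - 1) = a * (n - 1) + c * (n - 1) := by rw [hc]; ring
            omega
          have h2 : (n - 1) ∣ j * ((k' : ℕ) - (k : ℕ)) := by
            refine ⟨c, ?_⟩
            rw [Nat.mul_sub, hjd, Nat.mul_comm]
          have hdvd : (n - 1) ∣ (k' : ℕ) - (k : ℕ) :=
            hcop.dvd_of_dvd_mul_left h2
          have hz : (k' : ℕ) - (k : ℕ) = 0 := by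
            rcases Nat.eq_zero_or_pos ((k' : ℕ) - (k : ℕ)) with h | h
            · exact h
            · have hklt := k'.isLt
              have hk1 : (k : ℕ) ≠ 0 := fun hh => hk (Fin.ext (by simp [hh]))
              exact absurd (Nat.le_of_dvd h hdvd) (by omega)
          omega
        have hk1 : (k : ℕ) ≠ 0 := fun h => hk (Fin.ext (by simp [h]))
        have hk'1 : (k' : ℕ) ≠ 0 := fun h => hk' (Fin.ext (by simp [h]))
        rcases le_total (k : ℕ) (k' : ℕ) with h | h
        · exact Fin.ext (main k k' hk hk' h (by omega))
        · exact Fin.ext (main k' k hk' hk h (by omega)).symm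
    -- degree of the modulus
    have hdegf2 : (X ^ n - C f₁ * X : R[X]).degree = (n : ℕ) := by
      rw [degree_sub_eq_left_of_degree_lt (by rwa [degree_X_pow]), degree_X_pow]
    refine ⟨Equiv.ofBijective g (Finite.injective_iff_bijective.mp hginj),
      fun k => if k = 0 then 1 else ωj ^ (k : ℕ) * f₁ ^ ((j * k - 1) / (n - 1)),
      fun k => ?_, fun k m => ?_⟩
    · by_cases hk : k = 0
      · simp [hk]
      · simp only [if_neg hk]
        exact (hωj.pow _).mul (hf₁.pow _)
    · by_cases hk : k = 0
      · subst hk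
        have h1 : ((C ωj * X ^ j : R[X]) ^ ((0 : Fin n) : ℕ)) %ₘ (X ^ n - C f₁ * X)
            = 1 := by
          rw [Fin.val_zero, pow_zero]
          refine (modByMonic_eq_self_iff hf).mpr ?_
          rw [hdegf2, degree_one]
          exact_mod_cast show 0 < n by omega
        rw [h1, coeff_one]
        simp only [Equiv.ofBijective_apply, hg, dif_pos, if_pos rfl]
        by_cases hm : m = 0
        · simp [hm]
        · have : (m : ℕ) ≠ 0 := fun h => hm (Fin.ext (by simp [h]))
          simp [hm, this]
      · set a := (j * (k : ℕ) - 1) / (n - 1) with ha_def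
        set m0 := (j * (k : ℕ) - 1) % (n - 1) + 1 with hm0_def
        have e := hdec k hk
        have hpow : (C ωj * X ^ j : R[X]) ^ (k : ℕ)
            = C (ωj ^ (k : ℕ)) * X ^ (j * (k : ℕ)) := by
          rw [mul_pow, ← C_pow, ← pow_mul]
        have hkey := key_dvd n hn f₁ a m0 (by omega)
        have hid : C (ωj ^ (k : ℕ)) * X ^ (j * (k : ℕ))
              - C (ωj ^ (k : ℕ) * f₁ ^ a) * X ^ m0
            = C (ωj ^ (k : ℕ)) * (X ^ (a * (n - 1) + m0) - (C f₁) ^ a * X ^ m0) := by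
          rw [e, C_mul, ← C_pow]
          ring
        have hdiff : (X ^ n - C f₁ * X : R[X]) ∣
            C (ωj ^ (k : ℕ)) * X ^ (j * (k : ℕ)) - C (ωj ^ (k : ℕ) * f₁ ^ a) * X ^ m0 := by
          rw [hid]
          exact hkey.mul_left _
        have hmod : (C ωj * X ^ j : R[X]) ^ (k : ℕ) %ₘ (X ^ n - C f₁ * X)
            = C (ωj ^ (k : ℕ) * f₁ ^ a) * X ^ m0 := by
          rw [hpow]
          refine mod_eq_of hf hdiff ?_
          rw [hdegf2]
          refine lt_of_le_of_lt (degree_C_mul_X_pow_le _ _) ?_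
          exact_mod_cast (show m0 < n by have := Nat.mod_lt (j * (k : ℕ) - 1) hD; omega)
        rw [hmod, coeff_C_mul, coeff_X_pow]
        simp only [Equiv.ofBijective_apply, hg, dif_neg hk, if_neg hk]
        by_cases hm : (m : ℕ) = m0
        · rw [if_pos hm, if_pos (Fin.ext hm), mul_one]
        · rw [if_neg hm, if_neg (fun h => hm (congrArg Fin.val h)), mul_zero]
  · -- divisibility part
    have hjn : j * (n - 1) + j = j * n := by
      rw [← Nat.mul_succ, Nat.succ_eq_add_one, Nat.sub_add_cancel (by omega)]
    have h1 : (X ^ n - C f₁ * X : R[X]) ∣ (X ^ (j * n) - (C f₁) ^ j * X ^ j) := by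
      have := key_dvd n hn f₁ j j hj1; rwa [hjn] at this
    have e1 : (C ωj * X ^ j : R[X]) ^ n = (C ωj) ^ n * X ^ (j * n) := by
      rw [mul_pow, ← pow_mul]
    have e2 : (C (ωj ^ (n - 1) * f₁ ^ j) * (C ωj * X ^ j) : R[X])
        = (C ωj) ^ n * ((C f₁) ^ j * X ^ j) := by
      calc (C (ωj ^ (n - 1) * f₁ ^ j) * (C ωj * X ^ j) : R[X])
          = ((C ωj) ^ (n - 1) * C ωj) * ((C f₁) ^ j * X ^ j) := by
            rw [C_mul, C_pow, C_pow]; ring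
        _ = (C ωj) ^ n * ((C f₁) ^ j * X ^ j) := by
            rw [← pow_succ, Nat.sub_add_cancel (by omega)]
    rw [e1, e2, ← mul_sub]
    exact h1.mul_left _
end
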